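/- Let 𝒜 ⊆ M_n be a *-subalgebra with identity, U a subspace of hermitian matrices with id ∈ U, and p ∈ 𝒜 a projection. If q ∈ 𝒜 is a projection with K(q) ⊇ K(p₀(u)) for some u ∈ U, where K(r) = (id−r)𝒜⁺(id−r) ∩ U, and if K(q) = K(p₀(u)), then q ⪯ p₀(u); that is, any projection defining the same cone K as a ground projection is dominated by that ground projection in the Löwner order. -/

import Mathlib

open Matrix
open scoped ComplexOrder

/-- The smallest eigenvalue (ground energy) of a matrix. -/
noncomputable def minEig {n : ℕ} (a : Matrix (Fin n) (Fin n) ℂ) : ℝ :=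
  sInf {c : ℝ | ∃ v : Fin n → ℂ, v ≠ 0 ∧ a.mulVec v = (c : ℂ) • v}

/-- The ground space of a hermitian matrix: the eigenspace of its smallest eigenvalue. -/
noncomputable def groundSpaceSet {n : ℕ} (a : Matrix (Fin n) (Fin n) ℂ) :
    Set (Fin n → ℂ) :=
  {v | a.mulVec v = (minEig a : ℂ) • v}

/-- The cone `K(p) = p'𝒜⁺p' ∩ U`, `p' = 1 - p`. -/
def coneK {n : ℕ} (𝒜 : StarSubalgebra ℂ (Matrix (Fin n) (Fin n) ℂ))
    (U : Submodule ℝ (Matrix (Fin n) (Fin n) ℂ))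
    (p : Matrix (Fin n) (Fin n) ℂ) : Set (Matrix (Fin n) (Fin n) ℂ) :=
  {u | u ∈ U ∧ ∃ a : Matrix (Fin n) (Fin n) ℂ, a ∈ 𝒜 ∧ a.PosSemidef ∧
    u = (1 - p) * a * (1 - p)}

/-!
Shifting `u` by its ground energy gives `b = u - λ₀ • 1 ∈ U`, which is positive semidefinite and
whose kernel is exactly the ground space `range p`. Hence `b = (1 - p) b (1 - p)` lies in `K(p)`,
so in `K(q)`, which forces `b q = 0`: the range of `q` sits inside the ground space, i.e.
`p q = q`, and for two orthogonal projections this is `q ≤ p`.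
-/

open scoped MatrixOrder

namespace Matrix

variable {m 𝕜 : Type*} [Fintype m] [RCLike 𝕜]

theorem setOf_exists_mulVec_eq_smul_eq_spectrum [DecidableEq m] (a : Matrix m m 𝕜) :
    {c : ℝ | ∃ v : m → 𝕜, v ≠ 0 ∧ a *ᵥ v = (c : 𝕜) • v} = spectrum ℝ a := by
  ext c
  rw [Set.mem_ofPred_eq, ← spectrum.algebraMap_mem_iff 𝕜, RCLike.algebraMap_eq_ofReal,
    ← spectrum_toLin', ← Module.End.hasEigenvalue_iff_mem_spectrum, Module.End.hasEigenvalue_iff,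
    Submodule.ne_bot_iff]
  simp [and_comm]

theorem mul_eq_right_of_range_mulVec_subset {R : Type*} [CommSemiring R] {p q : Matrix m m R}
    (hp : IsIdempotentElem p) (h : Set.range q.mulVec ⊆ Set.range p.mulVec) : p * q = q :=
  ext_iff_mulVec.2 fun x => by
    obtain ⟨y, hy⟩ := h ⟨x, rfl⟩
    rw [← mulVec_mulVec, ← hy, mulVec_mulVec, hp.eq]

end Matrix

theorem minEig_eq_sInf_spectrum {n : ℕ} (a : Matrix (Fin n) (Fin n) ℂ) :
    minEig a = sInf (spectrum ℝ a) :=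
  congrArg sInf (setOf_exists_mulVec_eq_smul_eq_spectrum a)

theorem Matrix.IsHermitian.minEig_le {n : ℕ} {a : Matrix (Fin n) (Fin n) ℂ} (ha : a.IsHermitian)
    {c : ℝ} (hc : c ∈ spectrum ℝ a) : minEig a ≤ c := by
  rw [minEig_eq_sInf_spectrum]
  refine csInf_le ?_ hc
  rw [ha.spectrum_real_eq_range_eigenvalues]
  exact (Set.finite_range _).bddBelow

theorem Matrix.IsHermitian.posSemidef_sub_minEig_smul_one {n : ℕ} {a : Matrix (Fin n) (Fin n) ℂ}
    (ha : a.IsHermitian) : (a - (minEig a : ℂ) • 1).PosSemidef := by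
  have hshift : (minEig a : ℂ) • (1 : Matrix (Fin n) (Fin n) ℂ) = algebraMap ℝ _ (minEig a) := by
    rw [Algebra.algebraMap_eq_smul_one, Complex.coe_smul]
  have hb : (a - algebraMap ℝ _ (minEig a)).IsHermitian :=
    ha.sub (IsSelfAdjoint.algebraMap _ (.all _))
  rw [hshift, hb.posSemidef_iff_eigenvalues_nonneg]
  intro i
  obtain ⟨c, hc, _, rfl, hi⟩ :=
    spectrum.sub_singleton_eq a (minEig a) ▸ hb.eigenvalues_mem_spectrum_real i
  rw [← hi]
  exact sub_nonneg.2 (ha.minEig_le hc)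

theorem mem_groundSpaceSet_iff {n : ℕ} {a : Matrix (Fin n) (Fin n) ℂ} {v : Fin n → ℂ} :
    v ∈ groundSpaceSet a ↔ (a - (minEig a : ℂ) • 1) *ᵥ v = 0 := by
  rw [sub_mulVec, smul_mulVec, one_mulVec, sub_eq_zero]
  rfl

section coneK

variable {n : ℕ} {𝒜 : StarSubalgebra ℂ (Matrix (Fin n) (Fin n) ℂ)}
  {U : Submodule ℝ (Matrix (Fin n) (Fin n) ℂ)} {p b : Matrix (Fin n) (Fin n) ℂ}

theorem mem_coneK_of_mul_eq_zero (hbU : b ∈ U) (hbA : b ∈ 𝒜) (hb : b.PosSemidef)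
    (hbp : b * p = 0) (hpb : p * b = 0) : b ∈ coneK 𝒜 U p :=
  ⟨hbU, b, hbA, hb, by rw [sub_mul, one_mul, hpb, sub_zero, mul_sub, mul_one, hbp, sub_zero]⟩

theorem mul_eq_zero_of_mem_coneK (hp : IsIdempotentElem p) (hb : b ∈ coneK 𝒜 U p) :
    b * p = 0 := by
  obtain ⟨-, a, -, -, rfl⟩ := hb
  rw [mul_assoc, hp.one_sub_mul_self, mul_zero]

end coneK

theorem stmt10_general {n : ℕ} (𝒜 : StarSubalgebra ℂ (Matrix (Fin n) (Fin n) ℂ))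
    (U : Submodule ℝ (Matrix (Fin n) (Fin n) ℂ))
    (hU : ∀ u ∈ U, u ∈ 𝒜 ∧ uᴴ = u)
    (h1 : (1 : Matrix (Fin n) (Fin n) ℂ) ∈ U)
    (u : Matrix (Fin n) (Fin n) ℂ) (hu : u ∈ U)
    (p : Matrix (Fin n) (Fin n) ℂ) (hpH : pᴴ = p) (hpi : p * p = p)
    (hp0 : Set.range p.mulVec = groundSpaceSet u)
    (q : Matrix (Fin n) (Fin n) ℂ) (hqH : qᴴ = q) (hqi : q * q = q)
    (hsup : coneK 𝒜 U p ⊆ coneK 𝒜 U q) :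
    (p - q).PosSemidef := by
  have huH : u.IsHermitian := (hU u hu).2
  have hbU : u - (minEig u : ℂ) • 1 ∈ U := by
    rw [Complex.coe_smul]
    exact U.sub_mem hu (U.smul_mem _ h1)
  set b := u - (minEig u : ℂ) • 1
  have hb_ker : ∀ v, b *ᵥ v = 0 ↔ v ∈ Set.range p.mulVec := fun v => by
    rw [hp0, mem_groundSpaceSet_iff]
  obtain ⟨hbA, hbH⟩ := hU b hbU
  have hbp : b * p = 0 := ext_iff_mulVec.2 fun x => by
    rw [← mulVec_mulVec, (hb_ker _).2 ⟨x, rfl⟩, zero_mulVec]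
  have hpb : p * b = 0 := by
    simpa [hpH, hbH] using congrArg conjTranspose hbp
  have hbq : b * q = 0 := mul_eq_zero_of_mem_coneK hqi
    (hsup (mem_coneK_of_mul_eq_zero hbU hbA huH.posSemidef_sub_minEig_smul_one hbp hpb))
  have hpq : p * q = q := mul_eq_right_of_range_mulVec_subset hpi <| by
    rintro _ ⟨x, rfl⟩
    rw [← hb_ker, mulVec_mulVec, hbq, zero_mulVec]
  exact IsStarProjection.le_of_mul_eq_right ⟨hqi, hqH⟩ ⟨hpi, hpH⟩ hpq

/-- easy direction of the variation principle.  Let `𝒜 ⊆ Mₙ(ℂ)` be a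
*-subalgebra with identity, `U` a real subspace of hermitian matrices in `𝒜` with
`id ∈ U`, and `u ∈ U`.  If `p` is the ground projection of `u` and `q ∈ 𝒜` is a
projection with `K(q) ⊇ K(p₀(u))` and `K(q) = K(p₀(u))`, then `q ⪯ p₀(u)` in the
Löwner order. -/
theorem stmt10 {n : ℕ} (𝒜 : StarSubalgebra ℂ (Matrix (Fin n) (Fin n) ℂ))
    (U : Submodule ℝ (Matrix (Fin n) (Fin n) ℂ))
    (hU : ∀ u ∈ U, u ∈ 𝒜 ∧ uᴴ = u)
    (h1 : (1 : Matrix (Fin n) (Fin n) ℂ) ∈ U)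
    (u : Matrix (Fin n) (Fin n) ℂ) (hu : u ∈ U)
    (p : Matrix (Fin n) (Fin n) ℂ) (hp : p ∈ 𝒜) (hpH : pᴴ = p) (hpi : p * p = p)
    (hp0 : Set.range p.mulVec = groundSpaceSet u)
    (q : Matrix (Fin n) (Fin n) ℂ) (hq : q ∈ 𝒜) (hqH : qᴴ = q) (hqi : q * q = q)
    (hsup : coneK 𝒜 U p ⊆ coneK 𝒜 U q)
    (heq : coneK 𝒜 U q = coneK 𝒜 U p) :
    (p - q).PosSemidef :=
  stmt10_general 𝒜 U hU h1 u hu p hpH hpi hp0 q hqH hqi hsup
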